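/- For the Kneser graph KG_{p,2} with p ≥ 4, n/(n − √(s⁺)) ≤ ω(KG_{p,2}), where n = C(p,2), s⁺ is the sum of squares of the positive adjacency eigenvalues, and ω is the clique number. -/

import Mathlib

/-!
`KG_{p,2}` is strongly regular with parameters `(C(p,2), C(p-2,2), C(p-4,2), C(p-3,2))`, so its
adjacency matrix `A` satisfies `(A - k)(A - 1)(A + (p - 3)) = 0` and every eigenvalue is
`k = C(p-2,2)`, `1` or `-(p-3)`. Knowing that the eigenvalues lie in this three-element set,
`s⁺` is determined by `n`, `tr A = 0` and `tr A² = n k`; it equals `(p-1)(p-3)(p²-6p+12)/4`,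
which is at most `(n - p)²`. Hence `n / (n - √s⁺) ≤ n / p = (p - 1) / 2 ≤ ⌊p/2⌋`, and the pairs
`{2i, 2i+1}` form a clique of size `⌊p/2⌋`.
-/

open Finset

def kneserGraph (p : ℕ) : SimpleGraph {s : Finset (Fin p) // s.card = 2} where
  Adj a b := Disjoint a.1 b.1
  symm := ⟨fun a b h => h.symm⟩
  loopless := ⟨by
    rintro ⟨s, hs⟩ h
    simp only [disjoint_self] at h
    simp [h] at hs⟩

open Matrix Polynomial

namespace Matrix.IsHermitian

variable {n : Type*} [Fintype n] [DecidableEq n] {A : Matrix n n ℝ}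

theorem eval_eigenvalues_eq_zero_of_aeval_eq_zero (hA : A.IsHermitian) {q : ℝ[X]}
    (hq : aeval A q = 0) (i : n) : q.eval (hA.eigenvalues i) = 0 := by
  have : Nonempty n := ⟨i⟩
  simpa [hq, spectrum.zero_eq] using
    spectrum.subset_polynomial_aeval A q ⟨_, hA.eigenvalues_mem_spectrum_real i, rfl⟩

theorem trace_pow_eq_sum_eigenvalues_pow (hA : A.IsHermitian) (k : ℕ) :
    (A ^ k).trace = ∑ i, hA.eigenvalues i ^ k := by
  conv_lhs => rw [hA.spectral_theorem]
  rw [← map_pow, Unitary.conjStarAlgAut_apply, trace_mul_cycle, Unitary.coe_star_mul_self,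
    one_mul, diagonal_pow, trace_diagonal]
  rfl

end Matrix.IsHermitian

/-- `x ↦ x ^ 2 - c ^ 2 (x - a)(x - b) / ((c - a)(c - b))` agrees with `x ^ 2` at `a` and `b` and
vanishes at `c`. -/
theorem sum_sq_filter_pos_of_forall_mem {ι : Type*} [Fintype ι] (x : ι → ℝ) {a b c : ℝ}
    (ha : 0 < a) (hb : 0 < b) (hc : c ≤ 0) (hx : ∀ i, x i = a ∨ x i = b ∨ x i = c) :
    ∑ i ∈ univ.filter (fun i => 0 < x i), x i ^ 2 = ∑ i, x i ^ 2 - c ^ 2 / ((c - a) * (c - b)) *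
      (∑ i, x i ^ 2 - (a + b) * ∑ i, x i + Fintype.card ι * (a * b)) := by
  have hca : c - a ≠ 0 := by linarith
  have hcb : c - b ≠ 0 := by linarith
  have hquadratic : ∑ i, x i ^ 2 - (a + b) * ∑ i, x i + Fintype.card ι * (a * b) =
      ∑ i, (x i - a) * (x i - b) := by
    simp only [mul_sum, ← sum_sub_distrib, ← card_univ, ← nsmul_eq_mul, ← sum_const,
      ← sum_add_distrib]
    exact sum_congr rfl fun i _ => by ring
  rw [hquadratic, sum_filter, mul_sum, ← sum_sub_distrib]
  refine sum_congr rfl fun i _ => ?_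
  rcases hx i with h | h | h <;> rw [h]
  · simp [ha]
  · simp [hb]
  · rw [if_neg hc.not_gt]
    field_simp
    ring

theorem cast_choose_two_sub {K : Type*} [Field K] [CharZero K] {p m : ℕ} (h : m ≤ p) :
    ((p - m).choose 2 : K) = (p - m) * (p - m - 1) / 2 := by
  rw [Nat.cast_choose_two, Nat.cast_sub h]

theorem Finset.card_union_of_card_eq_two_of_not_disjoint {α : Type*} [DecidableEq α]
    {s t : Finset α} (hs : #s = 2) (ht : #t = 2) (hne : s ≠ t) (h : ¬Disjoint s t) :
    #(s ∪ t) = 3 := by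
  have hpos : 0 < #(s ∩ t) := card_pos.2 (not_disjoint_iff_nonempty_inter.1 h)
  have hlt : #(s ∩ t) < #s := by
    refine card_lt_card (inter_subset_left.ssubset_of_ne fun hst => hne ?_)
    exact eq_of_subset_of_card_le (inter_eq_left.1 hst) (hs.trans ht.symm).ge
  have := card_union_add_card_inter s t
  omega

namespace SimpleGraph

variable {V : Type*} {G : SimpleGraph V} [DecidableRel G.Adj]

theorem adjMatrix_compl_eq_of_one_sub {α : Type*} [DecidableEq V] [Ring α] :
    Gᶜ.adjMatrix α = of 1 - 1 - G.adjMatrix α := by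
  ext v w
  by_cases h : v = w
  · subst h; simp
  · by_cases hvw : G.Adj v w <;> simp [one_apply_ne h, h, hvw]

variable [Fintype V]

theorem IsRegularOfDegree.adjMatrix_mul_of_one {α : Type*} [NonAssocSemiring α] {d : ℕ}
    (h : G.IsRegularOfDegree d) : G.adjMatrix α * of 1 = (d : α) • of 1 := by
  ext v w
  simp [adjMatrix_mul_apply, h v]

theorem IsRegularOfDegree.trace_adjMatrix_sq {α : Type*} [DecidableEq V] [Semiring α] {d : ℕ}
    (h : G.IsRegularOfDegree d) : (G.adjMatrix α ^ 2).trace = Fintype.card V * d := by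
  simp only [trace, sq, diag_apply, adjMatrix_mul_self_apply_self, h.degree_eq, sum_const,
    card_univ, nsmul_eq_mul]

theorem IsSRGWith.eval_eigenvalues_eq_zero [DecidableEq V] {n k ℓ μ : ℕ}
    (h : G.IsSRGWith n k ℓ μ) (hA : (G.adjMatrix ℝ).IsHermitian) (i : V) :
    (hA.eigenvalues i - k) * (hA.eigenvalues i ^ 2 - (ℓ - μ) * hA.eigenvalues i - (k - μ)) = 0 := by
  have hquadratic : G.adjMatrix ℝ ^ 2 - ((ℓ : ℝ) • 1 - (μ : ℝ) • 1) * G.adjMatrix ℝ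
      - ((k : ℝ) • 1 - (μ : ℝ) • 1) = (μ : ℝ) • of 1 := by
    rw [h.matrix_eq, adjMatrix_compl_eq_of_one_sub, sub_mul, smul_mul_assoc, smul_mul_assoc,
      one_mul]
    simp only [← Nat.cast_smul_eq_nsmul ℝ, smul_sub]
    abel
  have hq : aeval (G.adjMatrix ℝ)
      ((X - C (k : ℝ)) * (X ^ 2 - C ((ℓ : ℝ) - μ) * X - C ((k : ℝ) - μ))) = 0 := by
    simp only [map_mul, map_sub, map_pow, aeval_X, aeval_C, Algebra.algebraMap_eq_smul_one]
    rw [hquadratic, sub_mul, mul_smul_comm, h.regular.adjMatrix_mul_of_one, smul_mul_assoc,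
      one_mul, smul_comm, sub_self]
  simpa using hA.eval_eigenvalues_eq_zero_of_aeval_eq_zero hq i

end SimpleGraph

section Kneser

variable {p : ℕ}

variable (p) in
def kneserPair (i : Fin (p / 2)) : {u : Finset (Fin p) // u.card = 2} :=
  ⟨{⟨2 * i, by omega⟩, ⟨2 * i + 1, by omega⟩}, card_pair (by simp [Fin.ext_iff])⟩

theorem disjoint_kneserPair {i j : Fin (p / 2)} (h : i ≠ j) :
    Disjoint (kneserPair p i).1 (kneserPair p j).1 := by
  rw [Fin.ne_iff_vne] at h
  simp [kneserPair, Fin.ext_iff]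
  omega

variable (p) in
def kneserPairCopy : (⊤ : SimpleGraph (Fin (p / 2))).Copy (kneserGraph p) where
  toHom := ⟨kneserPair p, disjoint_kneserPair⟩
  injective' i j hij := by
    by_contra hne
    have := disjoint_kneserPair hne
    change kneserPair p i = kneserPair p j at hij
    rw [hij, disjoint_self_iff_empty] at this
    simpa [this] using (kneserPair p j).2

theorem div_two_le_cliqueNum_kneserGraph : p / 2 ≤ (kneserGraph p).cliqueNum := by
  have h := SimpleGraph.isNClique_map_copy_top (kneserPairCopy p)
  rw [Fintype.card_fin] at h
  exact h.card_eq ▸ h.isClique.card_le_cliqueNum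

theorem card_filter_disjoint_eq_choose_two (s : Finset (Fin p)) :
    #{u : {u : Finset (Fin p) // u.card = 2} | Disjoint s u.1} = (p - #s).choose 2 := by
  rw [show p - #s = #sᶜ by simp [card_compl], ← card_powersetCard]
  refine card_bij (fun u _ => u.1) ?_ (fun u _ v _ h => Subtype.ext h) ?_
  · rintro ⟨u, hu⟩ hsu
    simp_all [mem_powersetCard, subset_compl_iff_disjoint_left]
  · intro u hu
    rw [mem_powersetCard, subset_compl_iff_disjoint_left] at hu
    exact ⟨⟨u, hu.2⟩, by simpa using hu.1, rfl⟩

variable [DecidableRel (kneserGraph p).Adj]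

theorem card_commonNeighbors_kneserGraph (s t : {u : Finset (Fin p) // u.card = 2}) :
    Fintype.card ((kneserGraph p).commonNeighbors s t) = (p - #(s.1 ∪ t.1)).choose 2 := by
  rw [← card_filter_disjoint_eq_choose_two, ← Set.toFinset_card]
  congr 1
  ext u
  rw [Set.mem_toFinset, SimpleGraph.mem_commonNeighbors]
  simp [kneserGraph, disjoint_union_left]

variable (p) in
theorem kneserGraph_isSRGWith :
    (kneserGraph p).IsSRGWith (p.choose 2) ((p - 2).choose 2) ((p - 4).choose 2)
      ((p - 3).choose 2) where
  card := by simp [Fintype.card_finset_len]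
  regular s := by
    have hcount := card_filter_disjoint_eq_choose_two s.1
    rw [s.2] at hcount
    rw [SimpleGraph.degree, ← hcount]
    congr 1
    ext u
    rw [SimpleGraph.mem_neighborFinset, mem_filter]
    simp [kneserGraph]
  of_adj s t h := by
    rw [card_commonNeighbors_kneserGraph, card_union_of_disjoint h, s.2, t.2]
  of_not_adj s t hne h := by
    rw [card_commonNeighbors_kneserGraph,
      card_union_of_card_eq_two_of_not_disjoint s.2 t.2 (Subtype.coe_injective.ne hne) h]

theorem eigenvalues_kneserGraph (hp : 4 ≤ p) (hA : ((kneserGraph p).adjMatrix ℝ).IsHermitian)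
    (i : {u : Finset (Fin p) // u.card = 2}) :
    hA.eigenvalues i = (p - 2) * (p - 3) / 2 ∨ hA.eigenvalues i = 1 ∨
      hA.eigenvalues i = -(p - 3) := by
  have h := (kneserGraph_isSRGWith p).eval_eigenvalues_eq_zero hA i
  rw [cast_choose_two_sub (by omega), cast_choose_two_sub (by omega),
    cast_choose_two_sub (by omega)] at h
  have hfactor : (hA.eigenvalues i - (p - 2) * (p - 3) / 2) * (hA.eigenvalues i - 1) *
      (hA.eigenvalues i + (p - 3)) = 0 := by
    linear_combination h
  rcases mul_eq_zero.1 hfactor with h | h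
  · rcases mul_eq_zero.1 h with h | h
    · exact .inl (by linarith)
    · exact .inr (.inl (by linarith))
  · exact .inr (.inr (by linarith))

theorem sum_sq_pos_eigenvalues_kneserGraph (hp : 4 ≤ p)
    (hA : ((kneserGraph p).adjMatrix ℝ).IsHermitian) :
    ∑ i ∈ univ.filter (fun i => 0 < hA.eigenvalues i), hA.eigenvalues i ^ 2 =
      (p - 1) * (p - 3) * (p ^ 2 - 6 * p + 12) / 4 := by
  have hp' : (4 : ℝ) ≤ p := by exact_mod_cast hp
  have hsum : ∑ i, hA.eigenvalues i = 0 := by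
    simpa using (hA.trace_pow_eq_sum_eigenvalues_pow 1).symm
  have hsum_sq : ∑ i, hA.eigenvalues i ^ 2 = p.choose 2 * (p - 2).choose 2 := by
    rw [← hA.trace_pow_eq_sum_eigenvalues_pow,
      (kneserGraph_isSRGWith p).regular.trace_adjMatrix_sq, (kneserGraph_isSRGWith p).card]
  have hcard : (Fintype.card {u : Finset (Fin p) // u.card = 2} : ℝ) = p.choose 2 := by
    rw [(kneserGraph_isSRGWith p).card]
  have h0 : (p : ℝ) ≠ 0 := by linarith
  have h2 : (p : ℝ) - 2 ≠ 0 := by linarith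
  have h3 : (p : ℝ) - 3 ≠ 0 := by linarith
  have hcoef : (-((p : ℝ) - 3)) ^ 2 / ((-((p : ℝ) - 3) - (p - 2) * (p - 3) / 2) * (-(p - 3) - 1))
      = 2 * (p - 3) / (p * (p - 2)) := by
    rw [show (-((p : ℝ) - 3) - (p - 2) * (p - 3) / 2) * (-(p - 3) - 1) = (p - 3) * p * (p - 2) / 2
      by ring, div_eq_div_iff (by positivity) (by positivity)]
    ring
  rw [sum_sq_filter_pos_of_forall_mem _ (by nlinarith) one_pos (by linarith)
      (eigenvalues_kneserGraph hp hA), hsum, hsum_sq, hcard, Nat.cast_choose_two,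
      cast_choose_two_sub (by omega), hcoef]
  field_simp
  ring

end Kneser

theorem kneser_conjecture (p : ℕ) (hp : 4 ≤ p)
    [DecidableRel (kneserGraph p).Adj]
    (hA : ((kneserGraph p).adjMatrix ℝ).IsHermitian) :
    ((p.choose 2 : ℕ) : ℝ) /
        (((p.choose 2 : ℕ) : ℝ) -
          Real.sqrt (∑ i ∈ univ.filter (fun i => 0 < hA.eigenvalues i),
            (hA.eigenvalues i) ^ 2)) ≤ ((kneserGraph p).cliqueNum : ℝ) := by
  have hp' : (4 : ℝ) ≤ p := by exact_mod_cast hp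
  have hclique : ((p : ℝ) - 1) / 2 ≤ (kneserGraph p).cliqueNum := by
    have h : p ≤ 2 * (kneserGraph p).cliqueNum + 1 := by
      have := div_two_le_cliqueNum_kneserGraph (p := p)
      omega
    have h' : (p : ℝ) ≤ 2 * (kneserGraph p).cliqueNum + 1 := by exact_mod_cast h
    linarith
  have hsqrt : Real.sqrt (∑ i ∈ univ.filter (fun i => 0 < hA.eigenvalues i),
      hA.eigenvalues i ^ 2) ≤ p * (p - 3) / 2 := by
    rw [sum_sq_pos_eigenvalues_kneserGraph hp hA, Real.sqrt_le_left (by nlinarith)]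
    nlinarith [mul_nonneg (by linarith : (0 : ℝ) ≤ p - 3)
      (by nlinarith : (0 : ℝ) ≤ 4 * p ^ 2 - 18 * p + 12)]
  rw [Nat.cast_choose_two]
  calc (p : ℝ) * (p - 1) / 2 / (p * (p - 1) / 2 - Real.sqrt _)
      ≤ p * (p - 1) / 2 / p := by
        gcongr
        · nlinarith
        · linarith
    _ = (p - 1) / 2 := by field_simp
    _ ≤ _ := hclique
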